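/- arXiv:2007.04469 — 4 statements merged into one kernel-verified Lean document; each statement's English description precedes it below -/
import Mathlib

section
/- Let G be a graph with edge set E and connectivity function γ, and let λ be a connectivity function on E such that λ(Y) = γ(Y) for every set Y that is e-controlled for some edge e of G. Then λ = γ. -/
variable {V E : Type*}

/-- The set of vertices incident with some edge of `X`, where `ends e` gives the
endvertices of the edge `e`. -/
def vertSet [Fintype V] [DecidableEq V] (ends : E → V × V) (X : Finset E) : Finset V :=
  Finset.univ.filter (fun v => ∃ e ∈ X, v = (ends e).1 ∨ v = (ends e).2)

/-- The connectivity function of the graph: γ(X) = |V(X)| + |V(E−X)| − |V(E)|. -/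
def gconn [Fintype V] [Fintype E] [DecidableEq V] [DecidableEq E] (ends : E → V × V)
    (X : Finset E) : ℤ :=
  (vertSet ends X).card + (vertSet ends Xᶜ).card - (vertSet ends (Finset.univ : Finset E)).card

/-- A vertex is incident with an edge if it is one of its endvertices. -/
def Incident (ends : E → V × V) (v : V) (e : E) : Prop :=
  v = (ends e).1 ∨ v = (ends e).2

/-- The boundary δ(X) = V(X) ∩ V(E−X). -/
def bdry [Fintype V] [Fintype E] [DecidableEq V] [DecidableEq E] (ends : E → V × V)
    (X : Finset E) : Finset V :=
  vertSet ends X ∩ vertSet ends Xᶜ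

/-- The star `S_v`: the set of edges incident with the vertex `v`. -/
def star' [Fintype E] (ends : E → V × V) [DecidableEq V] (v : V) : Finset E :=
  Finset.univ.filter (fun e => v = (ends e).1 ∨ v = (ends e).2)

/-- A subset `S'` of `S` is controlled if `S' = S`, `S' = ∅`, or `|S'| = 1`. -/
def Controlled (S S' : Finset E) : Prop :=
  S' ⊆ S ∧ (S' = S ∨ S' = ∅ ∨ S'.card = 1)

/-- A set `Y` is `e`-controlled if it is the union of three controlled subsets, one from
each of `S_u − {e}`, `S_v − {e}` and `{e}`, where `u` and `v` are the endvertices of `e`. -/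
def EControlled [Fintype E] [DecidableEq V] [DecidableEq E] (ends : E → V × V)
    (e : E) (Y : Finset E) : Prop :=
  ∃ A B C : Finset E,
    Controlled (star' ends (ends e).1 \ {e}) A ∧
    Controlled (star' ends (ends e).2 \ {e}) B ∧
    Controlled {e} C ∧
    Y = A ∪ B ∪ C

/-- A connectivity function: normalised, symmetric, submodular. -/
def IsConnFun [Fintype E] [DecidableEq E] (lam : Finset E → ℝ) : Prop :=
  lam ∅ = 0 ∧ (∀ X : Finset E, lam X = lam Xᶜ) ∧
    (∀ X Y : Finset E, lam (X ∪ Y) + lam (X ∩ Y) ≤ lam X + lam Y)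

section MainAux
set_option linter.unusedSectionVars false
variable [Fintype V] [Fintype E] [DecidableEq V] [DecidableEq E] (ends : E → V × V)

lemma mem_vertSet' {X : Finset E} {w : V} :
    w ∈ vertSet ends X ↔ ∃ e ∈ X, w = (ends e).1 ∨ w = (ends e).2 := by
  simp [vertSet]

lemma mem_star'' {w : V} {f : E} :
    f ∈ star' ends w ↔ w = (ends f).1 ∨ w = (ends f).2 := by
  simp [star']

lemma vertSet_union_compl (X : Finset E) :
    vertSet ends X ∪ vertSet ends Xᶜ = vertSet ends (Finset.univ : Finset E) := by
  ext w
  simp only [Finset.mem_union, mem_vertSet']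
  constructor
  · rintro (⟨e, _, h⟩ | ⟨e, _, h⟩) <;> exact ⟨e, Finset.mem_univ e, h⟩
  · rintro ⟨e, _, h⟩
    by_cases he : e ∈ X
    · exact Or.inl ⟨e, he, h⟩
    · exact Or.inr ⟨e, Finset.mem_compl.mpr he, h⟩

lemma gconn_eq_card_bdry (X : Finset E) : gconn ends X = (bdry ends X).card := by
  have h := Finset.card_union_add_card_inter (vertSet ends X) (vertSet ends Xᶜ)
  rw [vertSet_union_compl] at h
  unfold gconn bdry
  omega

lemma gconn_compl (X : Finset E) : gconn ends Xᶜ = gconn ends X := by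
  unfold gconn
  rw [compl_compl]
  ring

lemma gconn_eq_sum (X : Finset E) :
    gconn ends X = ∑ w : V, (if w ∈ bdry ends X then (1 : ℤ) else 0) := by
  rw [gconn_eq_card_bdry, Finset.sum_boole]
  simp

lemma mem_bdry_insert_of_ne {e : E} {S : Finset E} {w : V}
    (hw1 : w ≠ (ends e).1) (hw2 : w ≠ (ends e).2) :
    w ∈ bdry ends (insert e S) ↔ w ∈ bdry ends S := by
  have hinc : ¬ (w = (ends e).1 ∨ w = (ends e).2) := by tauto
  unfold bdry
  simp only [Finset.mem_inter, mem_vertSet', Finset.mem_insert, Finset.compl_insert,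
    Finset.mem_erase, Finset.mem_compl]
  constructor
  · rintro ⟨⟨f, hf | hf, h⟩, ⟨g, ⟨hg1, hg2⟩, h'⟩⟩
    · exact absurd (hf ▸ h) hinc
    · exact ⟨⟨f, hf, h⟩, ⟨g, hg2, h'⟩⟩
  · rintro ⟨⟨f, hf, h⟩, ⟨g, hg, h'⟩⟩
    have hge : g ≠ e := by rintro rfl; exact hinc h'
    exact ⟨⟨f, Or.inr hf, h⟩, ⟨g, ⟨hge, hg⟩, h'⟩⟩

lemma mem_bdry_insert {e : E} {S : Finset E} {w : V}
    (hw : w = (ends e).1 ∨ w = (ends e).2) :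
    w ∈ bdry ends (insert e S) ↔ ¬ (star' ends w \ {e} ⊆ S) := by
  unfold bdry
  simp only [Finset.mem_inter, mem_vertSet', Finset.compl_insert, Finset.mem_erase,
    Finset.mem_compl, Finset.mem_insert, Finset.not_subset, Finset.mem_sdiff,
    Finset.mem_singleton, mem_star'']
  constructor
  · rintro ⟨-, ⟨g, ⟨hg1, hg2⟩, h'⟩⟩
    exact ⟨g, ⟨h', hg1⟩, hg2⟩
  · rintro ⟨g, ⟨h', hg1⟩, hg2⟩
    exact ⟨⟨e, Or.inl rfl, hw⟩, ⟨g, ⟨hg1, hg2⟩, h'⟩⟩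

lemma mem_bdry_self {e : E} {S : Finset E} {w : V} (he : e ∉ S)
    (hw : w = (ends e).1 ∨ w = (ends e).2) :
    w ∈ bdry ends S ↔ ((star' ends w \ {e}) ∩ S).Nonempty := by
  unfold bdry
  simp only [Finset.mem_inter, mem_vertSet', Finset.mem_compl, Finset.Nonempty,
    Finset.mem_sdiff, Finset.mem_singleton, mem_star'']
  constructor
  · rintro ⟨⟨f, hf, h⟩, -⟩
    exact ⟨f, ⟨⟨h, fun hfe => he (hfe ▸ hf)⟩, hf⟩⟩
  · rintro ⟨f, ⟨⟨h, -⟩, hf⟩⟩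
    exact ⟨⟨f, hf, h⟩, ⟨e, he, hw⟩⟩

/-- Key increment lemma: the increment of `gconn` on adding `e` depends only on the
emptiness/fullness status of the intersections with the punctured stars at the endpoints. -/
lemma gconn_increment {e : E} {S T : Finset E} (hS : e ∉ S) (hT : e ∉ T)
    (hstat : ∀ w : V, (w = (ends e).1 ∨ w = (ends e).2) →
      (((star' ends w \ {e}) ∩ S).Nonempty ↔ ((star' ends w \ {e}) ∩ T).Nonempty) ∧
      ((star' ends w \ {e}) ⊆ S ↔ (star' ends w \ {e}) ⊆ T)) :
    gconn ends (insert e S) - gconn ends S = gconn ends (insert e T) - gconn ends T := by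
  rw [gconn_eq_sum, gconn_eq_sum, gconn_eq_sum, gconn_eq_sum,
    ← Finset.sum_sub_distrib, ← Finset.sum_sub_distrib]
  refine Finset.sum_congr rfl fun w _ => ?_
  by_cases hw : w = (ends e).1 ∨ w = (ends e).2
  · obtain ⟨h1, h2⟩ := hstat w hw
    rw [if_congr (mem_bdry_insert ends hw) rfl rfl,
        if_congr (mem_bdry_insert ends hw) rfl rfl,
        if_congr (mem_bdry_self ends hS hw) rfl rfl,
        if_congr (mem_bdry_self ends hT hw) rfl rfl,
        if_congr (not_congr h2) rfl rfl, if_congr h1 rfl rfl]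
  · push_neg at hw
    rw [if_congr (mem_bdry_insert_of_ne ends hw.1 hw.2) rfl rfl,
        if_congr (mem_bdry_insert_of_ne ends hw.1 hw.2) rfl rfl]
    ring

end MainAux

/-- Choose a controlled subset of `S` matching the emptiness/fullness status of `S ∩ X`. -/
noncomputable def pick [DecidableEq E] (S X : Finset E) : Finset E :=
  if S ⊆ X then S else if h : (S ∩ X).Nonempty then {h.choose} else ∅

section Pick
variable [DecidableEq E] {S X : Finset E}

lemma pick_subset_left : pick S X ⊆ S := by
  unfold pick
  split_ifs with h1 h2
  · exact subset_rfl
  · exact Finset.singleton_subset_iff.mpr (Finset.mem_inter.mp h2.choose_spec).1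
  · exact Finset.empty_subset _

lemma pick_subset_right : pick S X ⊆ X := by
  unfold pick
  split_ifs with h1 h2
  · exact h1
  · exact Finset.singleton_subset_iff.mpr (Finset.mem_inter.mp h2.choose_spec).2
  · exact Finset.empty_subset _

lemma pick_controlled : Controlled S (pick S X) := by
  refine ⟨pick_subset_left, ?_⟩
  unfold pick
  split_ifs with h1 h2
  · exact Or.inl rfl
  · exact Or.inr (Or.inr (Finset.card_singleton _))
  · exact Or.inr (Or.inl rfl)

lemma pick_nonempty (h : (S ∩ X).Nonempty) : (pick S X).Nonempty := by
  unfold pick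
  split_ifs with h1
  · obtain ⟨a, ha⟩ := h
    exact ⟨a, (Finset.mem_inter.mp ha).1⟩
  · exact ⟨_, Finset.mem_singleton_self _⟩

lemma pick_full (h : S ⊆ X) : pick S X = S := by
  unfold pick
  rw [if_pos h]

end Pick

section Stat
variable [DecidableEq E] {S A X : Finset E}

/-- Status matching for `Y` squeezed between `pick S X` and `X`. -/
lemma stat_of_squeeze {Y : Finset E} (h1 : pick S X ⊆ Y) (h2 : Y ⊆ X) :
    ((S ∩ Y).Nonempty ↔ (S ∩ X).Nonempty) ∧ (S ⊆ Y ↔ S ⊆ X) := by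
  constructor
  · constructor
    · rintro ⟨a, ha⟩
      rw [Finset.mem_inter] at ha
      exact ⟨a, Finset.mem_inter.mpr ⟨ha.1, h2 ha.2⟩⟩
    · intro h
      obtain ⟨a, ha⟩ := pick_nonempty h
      exact ⟨a, Finset.mem_inter.mpr ⟨pick_subset_left ha, h1 ha⟩⟩
  · constructor
    · exact fun h => h.trans h2
    · intro h
      rw [← pick_full h]
      exact h1

end Stat

lemma sub_step [Fintype E] [DecidableEq E] {lam : Finset E → ℝ} (hlam : IsConnFun lam)
    {e : E} {S T : Finset E} (hST : S ⊆ T) (heT : e ∉ T) :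
    lam (insert e T) - lam T ≤ lam (insert e S) - lam S := by
  have h := hlam.2.2 (insert e S) T
  have h1 : insert e S ∪ T = insert e T := by
    rw [Finset.insert_union, Finset.union_eq_right.mpr hST]
  have h2 : insert e S ∩ T = S := by
    ext a
    simp only [Finset.mem_inter, Finset.mem_insert]
    constructor
    · rintro ⟨rfl | ha, haT⟩
      · exact absurd haT heT
      · exact ha
    · exact fun ha => ⟨Or.inr ha, hST ha⟩
  rw [h1, h2] at h
  linarith


/-- If the connectivity function `λ` agrees with `γ` on all sets that are `e`-controlled for
some edge `e`, then `λ = γ`. -/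
theorem stmt5 [Fintype V] [Fintype E] [DecidableEq V] [DecidableEq E]
    (ends : E → V × V) (lam : Finset E → ℝ) (hlam : IsConnFun lam)
    (hagree : ∀ (e : E) (Y : Finset E), EControlled ends e Y → lam Y = (gconn ends Y : ℝ)) :
    ∀ X : Finset E, lam X = (gconn ends X : ℝ) := by
  intro X
  induction X using Finset.strongInductionOn with
  | _ X ih =>
  rcases X.eq_empty_or_nonempty with rfl | ⟨e, he⟩
  · have hv : vertSet ends (∅ : Finset E) = ∅ := by ext w; simp [vertSet]
    have h0 : gconn ends (∅ : Finset E) = 0 := by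
      unfold gconn
      rw [hv, Finset.compl_empty]
      simp
    rw [hlam.1, h0]
    norm_num
  · set X' := X.erase e with hX'def
    have heX' : e ∉ X' := Finset.notMem_erase e X
    have hins : insert e X' = X := Finset.insert_erase he
    have hIH : lam X' = (gconn ends X' : ℝ) := ih X' (Finset.erase_ssubset he)
    set W := Xᶜ with hWdef
    have heW : e ∉ W := by rw [hWdef, Finset.mem_compl]; simp [he]
    -- the approximating controlled sets
    set A0 := pick (star' ends (ends e).1 \ {e}) X' with hA0
    set B0 := pick (star' ends (ends e).2 \ {e}) X' with hB0
    set A1 := pick (star' ends (ends e).1 \ {e}) W with hA1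
    set B1 := pick (star' ends (ends e).2 \ {e}) W with hB1
    set Y0 := A0 ∪ B0 with hY0
    set Y1 := A1 ∪ B1 with hY1
    have hY0X' : Y0 ⊆ X' := Finset.union_subset pick_subset_right pick_subset_right
    have hY1W : Y1 ⊆ W := Finset.union_subset pick_subset_right pick_subset_right
    have heY0 : e ∉ Y0 := fun h => heX' (hY0X' h)
    have heY1 : e ∉ Y1 := fun h => heW (hY1W h)
    -- status matching
    have hstat0 : ∀ w : V, (w = (ends e).1 ∨ w = (ends e).2) →
        (((star' ends w \ {e}) ∩ Y0).Nonempty ↔ ((star' ends w \ {e}) ∩ X').Nonempty) ∧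
        ((star' ends w \ {e}) ⊆ Y0 ↔ (star' ends w \ {e}) ⊆ X') := by
      rintro w (rfl | rfl)
      · exact stat_of_squeeze Finset.subset_union_left hY0X'
      · exact stat_of_squeeze Finset.subset_union_right hY0X'
    have hstat1 : ∀ w : V, (w = (ends e).1 ∨ w = (ends e).2) →
        (((star' ends w \ {e}) ∩ Y1).Nonempty ↔ ((star' ends w \ {e}) ∩ W).Nonempty) ∧
        ((star' ends w \ {e}) ⊆ Y1 ↔ (star' ends w \ {e}) ⊆ W) := by
      rintro w (rfl | rfl)
      · exact stat_of_squeeze Finset.subset_union_left hY1W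
      · exact stat_of_squeeze Finset.subset_union_right hY1W
    have g0 := gconn_increment ends heY0 heX' hstat0
    have g1 := gconn_increment ends heY1 heW hstat1
    rw [hins] at g0
    -- complement bookkeeping
    have hWc : (insert e W)ᶜ = X' := by
      rw [hWdef, Finset.compl_insert, compl_compl]
    have gWe : gconn ends (insert e W) = gconn ends X' := by
      rw [← gconn_compl ends (insert e W), hWc]
    have gW : gconn ends W = gconn ends X := gconn_compl ends X
    rw [gWe, gW] at g1
    have lWe : lam (insert e W) = lam X' := by rw [hlam.2.1 (insert e W), hWc]
    have lW : lam W = lam X := (hlam.2.1 X).symm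
    -- e-controlled sets and agreement
    have hec0 : EControlled ends e Y0 :=
      ⟨A0, B0, ∅, pick_controlled, pick_controlled,
        ⟨Finset.empty_subset _, Or.inr (Or.inl rfl)⟩, by rw [Finset.union_empty]⟩
    have hec0' : EControlled ends e (insert e Y0) :=
      ⟨A0, B0, {e}, pick_controlled, pick_controlled,
        ⟨subset_rfl, Or.inl rfl⟩, by
          rw [hY0, Finset.union_comm (A0 ∪ B0) {e}, ← Finset.insert_eq]⟩
    have hec1 : EControlled ends e Y1 :=
      ⟨A1, B1, ∅, pick_controlled, pick_controlled,
        ⟨Finset.empty_subset _, Or.inr (Or.inl rfl)⟩, by rw [Finset.union_empty]⟩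
    have hec1' : EControlled ends e (insert e Y1) :=
      ⟨A1, B1, {e}, pick_controlled, pick_controlled,
        ⟨subset_rfl, Or.inl rfl⟩, by
          rw [hY1, Finset.union_comm (A1 ∪ B1) {e}, ← Finset.insert_eq]⟩
    have la0 : lam Y0 = (gconn ends Y0 : ℝ) := hagree e Y0 hec0
    have la0' : lam (insert e Y0) = (gconn ends (insert e Y0) : ℝ) :=
      hagree e (insert e Y0) hec0'
    have la1 : lam Y1 = (gconn ends Y1 : ℝ) := hagree e Y1 hec1
    have la1' : lam (insert e Y1) = (gconn ends (insert e Y1) : ℝ) :=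
      hagree e (insert e Y1) hec1'
    -- submodularity squeeze
    have s0 : lam (insert e X') - lam X' ≤ lam (insert e Y0) - lam Y0 :=
      sub_step hlam hY0X' heX'
    have s1 : lam (insert e W) - lam W ≤ lam (insert e Y1) - lam Y1 :=
      sub_step hlam hY1W heW
    rw [hins] at s0
    rw [lWe, lW] at s1
    have c0 : (gconn ends (insert e Y0) : ℝ) - (gconn ends Y0 : ℝ) =
        (gconn ends X : ℝ) - (gconn ends X' : ℝ) := by exact_mod_cast g0
    have c1 : (gconn ends (insert e Y1) : ℝ) - (gconn ends Y1 : ℝ) =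
        (gconn ends X' : ℝ) - (gconn ends X : ℝ) := by exact_mod_cast g1
    linarith
end

section
/- For a rank-n spike S(I), the connectivity function satisfies λ_{S(I)}(X) = n − |I ∩ {X, E_n − X}| for any transversal X. -/
abbrev En (n : ℕ) := Fin n × Bool

def leg (n : ℕ) (i : Fin n) : Set (En n) := {(i, true), (i, false)}

def IsTransversal {n : ℕ} (X : Set (En n)) : Prop :=
  ∀ i : Fin n, ((i, true) ∈ X ∧ (i, false) ∉ X) ∨ ((i, true) ∉ X ∧ (i, false) ∈ X)

def Hn (n : ℕ) : SimpleGraph (Set (En n)) where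
  Adj X Y := IsTransversal X ∧ IsTransversal Y ∧ (symmDiff X Y).ncard = 2
  symm := ⟨fun X Y ⟨h1, h2, h3⟩ => ⟨h2, h1, by rwa [symmDiff_comm]⟩⟩
  loopless := ⟨fun X ⟨_, _, h3⟩ => by
    simp [symmDiff_self, Set.bot_eq_empty] at h3⟩

def IndepInHn (n : ℕ) (I : Set (Set (En n))) : Prop :=
  (∀ X ∈ I, IsTransversal X) ∧ ∀ X ∈ I, ∀ Y ∈ I, ¬ (Hn n).Adj X Y

noncomputable def legCount {n : ℕ} (X : Set (En n)) : ℕ :=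
  Set.ncard {i : Fin n | (i, true) ∈ X ∨ (i, false) ∈ X}

noncomputable def mrank {α : Type*} (M : Matroid α) (X : Set α) : ℕ :=
  sSup {k | ∃ I, M.Indep I ∧ I ⊆ X ∧ I.ncard = k}

noncomputable def mconn {α : Type*} (M : Matroid α) (X : Set α) : ℤ :=
  (mrank M X : ℤ) + (mrank M (M.E \ X) : ℤ) - (mrank M M.E : ℤ)

def IsCircuit {α : Type*} (M : Matroid α) (C : Set α) : Prop :=
  C ⊆ M.E ∧ ¬ M.Indep C ∧ ∀ D ⊂ C, M.Indep D

def LegPairs (n : ℕ) : Set (Set (En n)) :=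
  {C | ∃ i j : Fin n, i ≠ j ∧ C = leg n i ∪ leg n j}

def SpikeCircuits (n : ℕ) (I : Set (Set (En n))) : Set (Set (En n)) :=
  (LegPairs n ∪ I) ∪ {C | C.ncard = n + 1 ∧ ∀ D ∈ LegPairs n ∪ I, ¬ D ⊆ C}

/-!
A transversal `T` has `n` elements and contains no union of two legs, so the only circuit it
can contain is `T` itself, which happens exactly when `T ∈ I`; hence `r(T) = n - |I ∩ {T}|`.
Every `(n+1)`-set contains a circuit, so `r(E_n) ≤ n`, and equality holds because `I`, being
independent in the hypercube, cannot contain both a transversal and its neighbour across a leg.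
Since `X ≠ E_n − X`, summing `r(X) + r(E_n − X) − r(E_n)` gives the formula.
-/

lemma Set.ncard_inter_pair {α : Type*} (s : Set α) {a b : α} (hab : a ≠ b) :
    (s ∩ {a, b}).ncard = (s ∩ {a}).ncard + (s ∩ {b}).ncard := by
  rw [Set.insert_eq, Set.inter_union_distrib_left]
  refine Set.ncard_union_eq ?_ ((Set.finite_singleton a).inter_of_right s)
    ((Set.finite_singleton b).inter_of_right s)
  exact (Set.disjoint_singleton.2 hab).mono Set.inter_subset_right Set.inter_subset_right

section Matroid

variable {α : Type*} {M : Matroid α}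

lemma isCircuit_iff_matroidIsCircuit {C : Set α} : IsCircuit M C ↔ M.IsCircuit C := by
  rw [IsCircuit, Matroid.isCircuit_iff_forall_ssubset, Matroid.Dep]
  tauto

lemma mrank_eq_of_indep_of_forall_le {X J : Set α} {k : ℕ} (hJ : M.Indep J) (hJX : J ⊆ X)
    (hJk : J.ncard = k) (hle : ∀ J', M.Indep J' → J' ⊆ X → J'.ncard ≤ k) : mrank M X = k :=
  IsGreatest.csSup_eq ⟨⟨J, hJ, hJX, hJk⟩, by rintro _ ⟨J', hJ', hJ'X, rfl⟩; exact hle J' hJ' hJ'X⟩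

variable [Finite α]

lemma Matroid.Indep.mrank_eq_ncard {J : Set α} (hJ : M.Indep J) : mrank M J = J.ncard :=
  mrank_eq_of_indep_of_forall_le hJ subset_rfl rfl fun _ _ hJ'J => Set.ncard_le_ncard hJ'J

lemma Matroid.IsCircuit.mrank_add_one {C : Set α} (hC : M.IsCircuit C) :
    mrank M C + 1 = C.ncard := by
  obtain ⟨e, he⟩ := hC.nonempty
  have hCe : (C \ {e}).ncard + 1 = C.ncard := Set.ncard_sdiff_singleton_add_one he
  rw [mrank_eq_of_indep_of_forall_le (hC.sdiff_singleton_indep he) Set.sdiff_subset rfl, hCe]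
  intro J hJ hJC
  have hJC' : J ⊂ C := hJC.ssubset_of_ne fun h => hC.not_indep (h ▸ hJ)
  have := Set.ncard_lt_ncard hJC'
  omega

end Matroid

section Transversal

variable {n : ℕ} {X Y : Set (En n)}

lemma IsTransversal.compl (hX : IsTransversal X) : IsTransversal Xᶜ := by
  intro i
  simp only [Set.mem_compl_iff, not_not]
  exact (hX i).symm

lemma IsTransversal.ncard_eq (hX : IsTransversal X) : X.ncard = n := by
  have hbij : Function.Bijective (fun p : X => (p : En n).1) := by
    refine ⟨?_, fun i => ?_⟩
    · rintro ⟨⟨i, b⟩, hb⟩ ⟨⟨j, c⟩, hc⟩ (rfl : i = j)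
      rcases hX i with ⟨h1, h2⟩ | ⟨h1, h2⟩ <;> cases b <;> cases c <;> simp_all
    · rcases hX i with ⟨h, -⟩ | ⟨-, h⟩
      exacts [⟨⟨_, h⟩, rfl⟩, ⟨⟨_, h⟩, rfl⟩]
  rw [← Nat.card_coe_set_eq, Nat.card_eq_of_bijective _ hbij, Nat.card_eq_fintype_card,
    Fintype.card_fin]

lemma IsTransversal.eq_of_subset (hX : IsTransversal X) (hY : IsTransversal Y) (hXY : X ⊆ Y) :
    X = Y := by
  ext ⟨i, b⟩
  have := @hXY (i, true)
  have := @hXY (i, false)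
  rcases hX i with h | h <;> rcases hY i with h' | h' <;> cases b <;> simp_all

lemma IsTransversal.symmDiff_leg (hX : IsTransversal X) (i : Fin n) :
    IsTransversal (symmDiff X (leg n i)) := by
  intro j
  by_cases hji : j = i
  · subst hji
    simp only [Set.mem_symmDiff, leg, Set.mem_insert_iff, Set.mem_singleton_iff]
    rcases hX j with h | h <;> simp_all
  · have hL : ∀ b, (j, b) ∉ leg n i := by simp [leg, hji]
    simpa [Set.mem_symmDiff, hL] using hX j

lemma IsTransversal.adj_symmDiff_leg (hX : IsTransversal X) (i : Fin n) :
    (Hn n).Adj X (symmDiff X (leg n i)) :=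
  ⟨hX, hX.symmDiff_leg i, by rw [symmDiff_symmDiff_cancel_left, leg, Set.ncard_pair (by simp)]⟩

lemma exists_isTransversal_notMem (hn : 0 < n) {I : Set (Set (En n))}
    (hI : ∀ X ∈ I, ∀ Y ∈ I, ¬ (Hn n).Adj X Y) : ∃ T, IsTransversal T ∧ T ∉ I := by
  have hT : IsTransversal {p : En n | p.2} := fun i => Or.inl ⟨rfl, Bool.false_ne_true⟩
  by_cases hTI : {p : En n | p.2} ∈ I
  · exact ⟨_, hT.symmDiff_leg ⟨0, hn⟩,
      fun h => hI _ hTI _ h (hT.adj_symmDiff_leg ⟨0, hn⟩)⟩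
  · exact ⟨_, hT, hTI⟩

end Transversal

section Spike

variable {n : ℕ} {I : Set (Set (En n))} {M : Matroid (En n)}

lemma spike_ncard_le_of_indep (hC : ∀ C, M.IsCircuit C ↔ C ∈ SpikeCircuits n I)
    {J : Set (En n)} (hJ : M.Indep J) : J.ncard ≤ n := by
  by_contra! hJn
  obtain ⟨D, hDJ, hDn⟩ := Set.exists_subset_card_eq (show n + 1 ≤ J.ncard from hJn)
  by_cases hsmall : ∃ C ∈ LegPairs n ∪ I, C ⊆ D
  · obtain ⟨C, hCmem, hCD⟩ := hsmall
    exact ((hC C).2 (Or.inl hCmem)).not_indep (hJ.subset (hCD.trans hDJ))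
  · push Not at hsmall
    exact ((hC D).2 (Or.inr ⟨hDn, hsmall⟩)).not_indep (hJ.subset hDJ)

lemma spike_indep_of_isTransversal (hI : ∀ T ∈ I, IsTransversal T) (hE : M.E = Set.univ)
    (hC : ∀ C, M.IsCircuit C ↔ C ∈ SpikeCircuits n I) {T : Set (En n)} (hT : IsTransversal T)
    (hTI : T ∉ I) : M.Indep T := by
  by_contra hdep
  obtain ⟨C, hCT, hCcirc⟩ := Matroid.Dep.exists_isCircuit_subset ⟨hdep, hE ▸ Set.subset_univ T⟩
  rcases (hC C).1 hCcirc with (⟨i, j, -, rfl⟩ | hCI) | ⟨hCn, -⟩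
  · have hx : (i, true) ∈ T := hCT (by simp [leg])
    have hy : (i, false) ∈ T := hCT (by simp [leg])
    rcases hT i with ⟨-, h⟩ | ⟨h, -⟩ <;> contradiction
  · exact hTI ((hI C hCI).eq_of_subset hT hCT ▸ hCI)
  · have := Set.ncard_le_ncard hCT
    rw [hCn, hT.ncard_eq] at this
    omega

lemma spike_mrank_add_ncard_inter_singleton (hI : ∀ T ∈ I, IsTransversal T)
    (hE : M.E = Set.univ) (hC : ∀ C, M.IsCircuit C ↔ C ∈ SpikeCircuits n I) {T : Set (En n)}
    (hT : IsTransversal T) : mrank M T + (I ∩ {T}).ncard = n := by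
  by_cases hTI : T ∈ I
  · rw [Set.inter_singleton_of_mem hTI, Set.ncard_singleton,
      ((hC T).2 (Or.inl (Or.inr hTI))).mrank_add_one, hT.ncard_eq]
  · rw [Set.inter_singleton_eq_empty.2 hTI, Set.ncard_empty, add_zero,
      (spike_indep_of_isTransversal hI hE hC hT hTI).mrank_eq_ncard, hT.ncard_eq]

lemma spike_mrank_univ (hn : 0 < n) (hI : IndepInHn n I) (hE : M.E = Set.univ)
    (hC : ∀ C, M.IsCircuit C ↔ C ∈ SpikeCircuits n I) : mrank M Set.univ = n := by
  obtain ⟨T, hT, hTI⟩ := exists_isTransversal_notMem hn hI.2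
  exact mrank_eq_of_indep_of_forall_le (spike_indep_of_isTransversal hI.1 hE hC hT hTI)
    (Set.subset_univ T) hT.ncard_eq fun _ hJ _ => spike_ncard_le_of_indep hC hJ

end Spike

/-- On a transversal `X`, the connectivity function of the spike `S(I)` is
`n − |I ∩ {X, E_n − X}|`. -/
theorem stmt9 {n : ℕ} (hn : 2 < n) (I : Set (Set (En n))) (hI : IndepInHn n I)
    (M : Matroid (En n)) (hE : M.E = Set.univ)
    (hC : ∀ C, IsCircuit M C ↔ C ∈ SpikeCircuits n I)
    (X : Set (En n)) (hX : IsTransversal X) :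
    mconn M X = (n : ℤ) - ((I ∩ {X, Xᶜ}).ncard : ℤ) := by
  have hn0 : 0 < n := by omega
  have hC' : ∀ C, M.IsCircuit C ↔ C ∈ SpikeCircuits n I := fun C =>
    isCircuit_iff_matroidIsCircuit.symm.trans (hC C)
  have hrX := spike_mrank_add_ncard_inter_singleton hI.1 hE hC' hX
  have hrXc := spike_mrank_add_ncard_inter_singleton hI.1 hE hC' hX.compl
  have hrE := spike_mrank_univ hn0 hI hE hC'
  have : Nonempty (En n) := ⟨(⟨0, hn0⟩, true)⟩
  rw [mconn, hE, ← Set.compl_eq_univ_sdiff, hrE, Set.ncard_inter_pair I ne_compl_self]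
  omega
end

section
/- Every spiky function λ: 2^{E_n} → ℕ is a connectivity function, i.e., it is normalised, symmetric, and submodular. -/
open Classical in
/-- The rank function of the free spike `S(∅)` (every rank-`n` spike has this rank
function away from the transversals). -/
noncomputable def freeSpikeRank (n : ℕ) (X : Set (En n)) : ℕ :=
  if ∀ i : Fin n, ¬ Disjoint (leg n i) X then n
  else if ∃ i, leg n i ⊆ X then legCount X + 1
  else X.ncard

/-- `λ_n(X) = r_n(X) + r_n(E_n − X) − n`: the common value of the connectivity function
of any rank-`n` spike on a non-transversal set `X`. -/
noncomputable def lamN (n : ℕ) (X : Set (En n)) : ℤ :=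
  (freeSpikeRank n X : ℤ) + (freeSpikeRank n Xᶜ : ℤ) - (n : ℤ)

/-- A spiky function: symmetric, extends `λ_n` on non-transversals, takes values in
`{n−2, n−1, n}` on transversals, and satisfies `λ(X) + λ(Y) ≥ 2n−2` for transversals
`X`, `Y` differing in exactly one element. -/
noncomputable def IsSpiky (n : ℕ) (lam : Set (En n) → ℕ) : Prop :=
  (∀ X, lam X = lam Xᶜ) ∧
  (∀ X, ¬ IsTransversal X → (lam X : ℤ) = lamN n X) ∧
  (∀ X, IsTransversal X → lam X = n - 2 ∨ lam X = n - 1 ∨ lam X = n) ∧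
  (∀ X Y, IsTransversal X → IsTransversal Y → (symmDiff X Y).ncard = 2 →
    2 * n - 2 ≤ lam X + lam Y)

/-!
Classify each leg as split, full or empty with respect to `X`, let `s(X)` be the number of
split legs, and call `X` mixed if it has both a full and an empty leg. Evaluating the free
spike's rank function shows that off the transversals `λ_n(X) = s(X) + 2·[X mixed]`, and
this formula `spikeConn` equals `n` on transversals. It is submodular because
`s(X ∪ Y) + s(X ∩ Y) + 2 d(X, Y) = s(X) + s(Y)`, where `d(X, Y)` counts the legs that `X` and
`Y` meet in different single elements, and mixedness of `X ∪ Y` or `X ∩ Y` forces mixedness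
of `X` or `Y` unless `d(X, Y) > 0`.

A spiky `λ` agrees with `spikeConn` off the transversals and lies between `n - 2` and
`spikeConn = n` on them. So submodularity only needs care for incomparable `X`, `Y` with
`X` a transversal: then `X ∪ Y`, `X ∩ Y` are non-mixed non-transversals, and the possible
loss of `2` at `X` is paid for by `d(X, Y) ≥ 1` or by `Y` being mixed; when `Y` is also a
transversal and `d(X, Y) = 1`, `X` and `Y` are adjacent and `λ(X) + λ(Y) ≥ 2n - 2`.
-/

section Counting

open Classical

variable {n : ℕ}

def IsSplitLeg (X : Set (En n)) (i : Fin n) : Prop :=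
  ((i, true) ∈ X ∧ (i, false) ∉ X) ∨ ((i, true) ∉ X ∧ (i, false) ∈ X)

def IsOppositeLeg (X Y : Set (En n)) (i : Fin n) : Prop :=
  ((i, true) ∈ X ∧ (i, false) ∉ X ∧ (i, true) ∉ Y ∧ (i, false) ∈ Y) ∨
  ((i, true) ∉ X ∧ (i, false) ∈ X ∧ (i, true) ∈ Y ∧ (i, false) ∉ Y)

def IsMixed (X : Set (En n)) : Prop := (∃ i, leg n i ⊆ X) ∧ ∃ i, leg n i ⊆ Xᶜ

noncomputable def splitCount (X : Set (En n)) : ℕ := (Finset.univ.filter (IsSplitLeg X)).card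

noncomputable def fullCount (X : Set (En n)) : ℕ := (Finset.univ.filter (leg n · ⊆ X)).card

noncomputable def oppositeCount (X Y : Set (En n)) : ℕ :=
  (Finset.univ.filter (IsOppositeLeg X Y)).card

noncomputable def spikeConn (X : Set (En n)) : ℕ := splitCount X + if IsMixed X then 2 else 0

lemma leg_subset_iff {X : Set (En n)} {i : Fin n} :
    leg n i ⊆ X ↔ (i, true) ∈ X ∧ (i, false) ∈ X := by
  simp [leg, Set.insert_subset_iff]

lemma leg_subset_compl_iff {X : Set (En n)} {i : Fin n} :
    leg n i ⊆ Xᶜ ↔ (i, true) ∉ X ∧ (i, false) ∉ X := by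
  simp [leg, Set.insert_subset_iff]

lemma isTransversal_iff {X : Set (En n)} :
    IsTransversal X ↔ (¬ ∃ i, leg n i ⊆ X) ∧ ¬ ∃ i, leg n i ⊆ Xᶜ := by
  simp only [IsTransversal, leg_subset_iff, Set.mem_compl_iff, not_exists, ← forall_and]
  refine forall_congr' fun i => ?_
  tauto

lemma IsTransversal.not_isMixed {X : Set (En n)} (hX : IsTransversal X) : ¬ IsMixed X :=
  fun h => (isTransversal_iff.1 hX).1 h.1

lemma isMixed_compl {X : Set (En n)} : IsMixed Xᶜ ↔ IsMixed X := by
  rw [IsMixed, IsMixed, compl_compl, and_comm]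

lemma splitCount_of_isTransversal {X : Set (En n)} (hX : IsTransversal X) :
    splitCount X = n := by
  rw [splitCount, Finset.filter_true_of_mem (p := IsSplitLeg X) fun i _ => hX i,
    Finset.card_univ, Fintype.card_fin]

lemma spikeConn_of_isTransversal {X : Set (En n)} (hX : IsTransversal X) :
    spikeConn X = n := by
  simp [spikeConn, splitCount_of_isTransversal hX, hX.not_isMixed]

lemma splitCount_compl (X : Set (En n)) : splitCount Xᶜ = splitCount X := by
  rw [splitCount, splitCount]
  congr 1
  exact Finset.filter_congr fun i _ => by simp only [IsSplitLeg, Set.mem_compl_iff, not_not]; tauto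

lemma fullCount_eq_zero_iff {X : Set (En n)} : fullCount X = 0 ↔ ¬ ∃ i, leg n i ⊆ X := by
  simp [fullCount, Finset.filter_eq_empty_iff]

lemma splitCount_add_fullCount_add_fullCount_compl (X : Set (En n)) :
    splitCount X + fullCount X + fullCount Xᶜ = n := by
  simp only [splitCount, fullCount, Finset.card_filter, ← Finset.sum_add_distrib]
  trans ∑ _i : Fin n, 1
  swap
  · simp
  refine Finset.sum_congr rfl fun i _ => ?_
  by_cases h₁ : (i, true) ∈ X <;> by_cases h₂ : (i, false) ∈ X <;>
    simp [IsSplitLeg, leg_subset_iff, h₁, h₂]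

lemma legCount_eq (X : Set (En n)) : legCount X = splitCount X + fullCount X := by
  rw [legCount, splitCount, fullCount, ← Finset.card_union_of_disjoint
    (Finset.disjoint_filter.2 fun i _ h => by simp [IsSplitLeg, leg_subset_iff] at h ⊢; tauto),
    ← Finset.filter_or, ← Set.ncard_coe_finset]
  congr 1
  ext i
  simp only [Finset.coe_filter, Finset.mem_univ, true_and, Set.mem_ofPred_eq, IsSplitLeg,
    leg_subset_iff]
  tauto

lemma ncard_eq_legCount {X : Set (En n)} (h : ¬ ∃ i, leg n i ⊆ X) : X.ncard = legCount X := by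
  have himage : Prod.fst '' X = {i : Fin n | (i, true) ∈ X ∨ (i, false) ∈ X} := by
    ext i
    simp [Bool.exists_bool, or_comm]
  rw [legCount, ← himage, Set.InjOn.ncard_image]
  rintro ⟨i, b⟩ hb ⟨j, c⟩ hc (rfl : i = j)
  by_contra hne
  refine h ⟨i, leg_subset_iff.2 ?_⟩
  cases b <;> cases c <;> simp_all

lemma forall_not_disjoint_leg_iff {X : Set (En n)} :
    (∀ i, ¬ Disjoint (leg n i) X) ↔ ¬ ∃ i, leg n i ⊆ Xᶜ := by
  simp [Set.subset_compl_iff_disjoint_right]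

lemma freeSpikeRank_of_not_exists_subset_compl {X : Set (En n)}
    (h : ¬ ∃ i, leg n i ⊆ Xᶜ) : freeSpikeRank n X = n := by
  rw [freeSpikeRank, if_pos (forall_not_disjoint_leg_iff.2 h)]

lemma freeSpikeRank_of_isMixed {X : Set (En n)} (h : IsMixed X) :
    freeSpikeRank n X = splitCount X + fullCount X + 1 := by
  rw [freeSpikeRank, if_neg (fun h' => forall_not_disjoint_leg_iff.1 h' h.2), if_pos h.1,
    legCount_eq]

lemma freeSpikeRank_of_not_exists_subset {X : Set (En n)} (h : ¬ ∃ i, leg n i ⊆ X)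
    (h' : ∃ i, leg n i ⊆ Xᶜ) : freeSpikeRank n X = splitCount X := by
  rw [freeSpikeRank, if_neg (fun h'' => forall_not_disjoint_leg_iff.1 h'' h'), if_neg h,
    ncard_eq_legCount h, legCount_eq, fullCount_eq_zero_iff.2 h, add_zero]

lemma lamN_eq_spikeConn {X : Set (En n)} (hX : ¬ IsTransversal X) :
    lamN n X = spikeConn X := by
  have hcount := splitCount_add_fullCount_add_fullCount_compl X
  have hsplit := splitCount_compl X
  rw [isTransversal_iff] at hX
  rw [lamN, spikeConn]
  by_cases hF : ∃ i, leg n i ⊆ X <;> by_cases hE : ∃ i, leg n i ⊆ Xᶜ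
  · have hmixed : IsMixed X := ⟨hF, hE⟩
    rw [freeSpikeRank_of_isMixed hmixed, freeSpikeRank_of_isMixed (isMixed_compl.2 hmixed),
      if_pos hmixed]
    push_cast
    omega
  · rw [freeSpikeRank_of_not_exists_subset_compl hE, freeSpikeRank_of_not_exists_subset hE
      (by rwa [compl_compl]), if_neg fun h => hE h.2, hsplit]
    simp
  · rw [freeSpikeRank_of_not_exists_subset hF hE,
      freeSpikeRank_of_not_exists_subset_compl (by rwa [compl_compl]), if_neg fun h => hF h.1]
    simp
  · exact absurd ⟨hF, hE⟩ hX

lemma splitCount_union_add_splitCount_inter (X Y : Set (En n)) :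
    splitCount (X ∪ Y) + splitCount (X ∩ Y) + 2 * oppositeCount X Y =
      splitCount X + splitCount Y := by
  simp only [splitCount, oppositeCount, Finset.card_filter, Finset.mul_sum,
    ← Finset.sum_add_distrib]
  refine Finset.sum_congr rfl fun i _ => ?_
  by_cases h₁ : (i, true) ∈ X <;> by_cases h₂ : (i, false) ∈ X <;>
    by_cases h₃ : (i, true) ∈ Y <;> by_cases h₄ : (i, false) ∈ Y <;>
    simp [IsSplitLeg, IsOppositeLeg, h₁, h₂, h₃, h₄]

lemma isMixed_and_isMixed_of_union_of_inter {X Y : Set (En n)} (hU : IsMixed (X ∪ Y))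
    (hW : IsMixed (X ∩ Y)) : IsMixed X ∧ IsMixed Y := by
  obtain ⟨-, i, hi⟩ := hU
  obtain ⟨⟨j, hj⟩, -⟩ := hW
  rw [Set.compl_union, Set.subset_inter_iff] at hi
  rw [Set.subset_inter_iff] at hj
  exact ⟨⟨⟨j, hj.1⟩, i, hi.1⟩, ⟨⟨j, hj.2⟩, i, hi.2⟩⟩

lemma isMixed_or_isMixed_of_union {X Y : Set (En n)} (hU : IsMixed (X ∪ Y))
    (hopp : ¬ ∃ i, IsOppositeLeg X Y i) : IsMixed X ∨ IsMixed Y := by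
  obtain ⟨⟨i, hi⟩, j, hj⟩ := hU
  rw [Set.compl_union, Set.subset_inter_iff] at hj
  have hi' : leg n i ⊆ X ∨ leg n i ⊆ Y := by
    simp only [leg_subset_iff, Set.mem_union] at hi ⊢
    simp only [IsOppositeLeg, not_exists] at hopp
    have := hopp i
    tauto
  exact hi'.imp (fun h => ⟨⟨i, h⟩, j, hj.1⟩) (fun h => ⟨⟨i, h⟩, j, hj.2⟩)

lemma isMixed_or_isMixed_of_inter {X Y : Set (En n)} (hW : IsMixed (X ∩ Y))
    (hopp : ¬ ∃ i, IsOppositeLeg X Y i) : IsMixed X ∨ IsMixed Y := by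
  rw [← isMixed_compl, Set.compl_inter] at hW
  rw [← isMixed_compl, ← isMixed_compl (X := Y)]
  refine isMixed_or_isMixed_of_union hW fun ⟨i, hi⟩ => hopp ⟨i, ?_⟩
  simp only [IsOppositeLeg, Set.mem_compl_iff, not_not] at hi ⊢
  tauto

lemma oppositeCount_pos {X Y : Set (En n)} (h : ∃ i, IsOppositeLeg X Y i) :
    0 < oppositeCount X Y :=
  let ⟨i, hi⟩ := h
  Finset.card_pos.2 ⟨i, by simpa using hi⟩

lemma spikeConn_union_add_spikeConn_inter_le (X Y : Set (En n)) :
    spikeConn (X ∪ Y) + spikeConn (X ∩ Y) ≤ spikeConn X + spikeConn Y := by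
  have hsplit := splitCount_union_add_splitCount_inter X Y
  have hboth := isMixed_and_isMixed_of_union_of_inter (X := X) (Y := Y)
  have hU := isMixed_or_isMixed_of_union (X := X) (Y := Y)
  have hW := isMixed_or_isMixed_of_inter (X := X) (Y := Y)
  have hopp := oppositeCount_pos (X := X) (Y := Y)
  simp only [spikeConn]
  split_ifs <;> grind

lemma spikeConn_empty : spikeConn (∅ : Set (En n)) = 0 := by
  have hmixed : ¬ IsMixed (∅ : Set (En n)) := fun ⟨⟨i, hi⟩, _⟩ => by
    simpa using leg_subset_iff.1 hi
  simp [spikeConn, splitCount, IsSplitLeg, hmixed]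

section Transversal

variable {X Y : Set (En n)}

lemma IsTransversal.not_isMixed_union (hX : IsTransversal X) : ¬ IsMixed (X ∪ Y) :=
  fun ⟨_, i, hi⟩ => (isTransversal_iff.1 hX).2
    ⟨i, hi.trans (Set.compl_subset_compl.2 Set.subset_union_left)⟩

lemma IsTransversal.not_isMixed_inter (hX : IsTransversal X) : ¬ IsMixed (X ∩ Y) :=
  fun ⟨⟨i, hi⟩, _⟩ => (isTransversal_iff.1 hX).1 ⟨i, hi.trans Set.inter_subset_left⟩

lemma IsTransversal.not_isTransversal_union (hX : IsTransversal X) (hYX : ¬ Y ⊆ X) :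
    ¬ IsTransversal (X ∪ Y) := by
  obtain ⟨⟨i, b⟩, hY, hX'⟩ := Set.not_subset.1 hYX
  refine fun hU => (isTransversal_iff.1 hU).1 ⟨i, leg_subset_iff.2 ?_⟩
  rcases hX i with h | h <;> cases b <;> simp_all

lemma IsTransversal.not_isTransversal_inter (hX : IsTransversal X) (hXY : ¬ X ⊆ Y) :
    ¬ IsTransversal (X ∩ Y) := by
  obtain ⟨⟨i, b⟩, hX', hY⟩ := Set.not_subset.1 hXY
  refine fun hW => (isTransversal_iff.1 hW).2 ⟨i, leg_subset_iff.2 ?_⟩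
  rcases hX i with h | h <;> cases b <;> simp_all

lemma IsTransversal.isMixed_or_exists_isOppositeLeg (hX : IsTransversal X) (hXY : ¬ X ⊆ Y)
    (hYX : ¬ Y ⊆ X) : IsMixed Y ∨ ∃ i, IsOppositeLeg X Y i := by
  by_contra! h
  obtain ⟨hmixed, hopp⟩ := h
  obtain ⟨⟨i, b⟩, hY, hX'⟩ := Set.not_subset.1 hYX
  obtain ⟨⟨j, c⟩, hX'', hY'⟩ := Set.not_subset.1 hXY
  refine hmixed ⟨⟨i, leg_subset_iff.2 ?_⟩, j, leg_subset_compl_iff.2 ?_⟩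
  · have := hopp i
    rcases hX i with h | h <;> cases b <;> simp_all [IsOppositeLeg]
  · have := hopp j
    rcases hX j with h | h <;> cases c <;> simp_all [IsOppositeLeg]

lemma IsTransversal.symmDiff_eq (hX : IsTransversal X) (hY : IsTransversal Y) :
    symmDiff X Y =
      ↑(Finset.univ.filter (IsOppositeLeg X Y) ×ˢ (Finset.univ : Finset Bool)) := by
  ext ⟨i, b⟩
  simp only [Set.mem_symmDiff, Finset.coe_product, Finset.coe_filter, Finset.mem_univ,
    true_and, Finset.coe_univ, Set.mem_prod, Set.mem_univ, and_true, Set.mem_ofPred_eq]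
  rcases hX i with h | h <;> rcases hY i with h' | h' <;> cases b <;> simp_all [IsOppositeLeg]

lemma IsTransversal.ncard_symmDiff (hX : IsTransversal X) (hY : IsTransversal Y) :
    (symmDiff X Y).ncard = 2 * oppositeCount X Y := by
  rw [hX.symmDiff_eq hY, Set.ncard_coe_finset, Finset.card_product, oppositeCount]
  simp [mul_comm]

end Transversal

end Counting

namespace IsSpiky

variable {n : ℕ} {lam : Set (En n) → ℕ} (hs : IsSpiky n lam) {X Y : Set (En n)}
include hs

lemma eq_spikeConn (hX : ¬ IsTransversal X) : lam X = spikeConn X :=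
  mod_cast (hs.2.1 X hX).trans (lamN_eq_spikeConn hX)

lemma le_spikeConn (X : Set (En n)) : lam X ≤ spikeConn X := by
  by_cases hX : IsTransversal X
  · rw [spikeConn_of_isTransversal hX]
    rcases hs.2.2.1 X hX with h | h | h <;> omega
  · exact (hs.eq_spikeConn hX).le

lemma sub_two_le (hX : IsTransversal X) : n - 2 ≤ lam X := by
  rcases hs.2.2.1 X hX with h | h | h <;> omega

lemma union_add_inter_add_oppositeCount (hX : IsTransversal X) (hXY : ¬ X ⊆ Y)
    (hYX : ¬ Y ⊆ X) :
    lam (X ∪ Y) + lam (X ∩ Y) + 2 * oppositeCount X Y = n + splitCount Y := by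
  rw [hs.eq_spikeConn (hX.not_isTransversal_union hYX),
    hs.eq_spikeConn (hX.not_isTransversal_inter hXY), spikeConn, spikeConn,
    if_neg hX.not_isMixed_union, if_neg hX.not_isMixed_inter]
  have hsplit := splitCount_union_add_splitCount_inter X Y
  rw [splitCount_of_isTransversal hX] at hsplit
  omega

lemma union_add_inter_le_of_isTransversal (hX : IsTransversal X) (hXY : ¬ X ⊆ Y)
    (hYX : ¬ Y ⊆ X) : lam (X ∪ Y) + lam (X ∩ Y) ≤ lam X + lam Y := by
  have hsum := hs.union_add_inter_add_oppositeCount hX hXY hYX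
  have hlamX := hs.sub_two_le hX
  by_cases hY : IsTransversal Y
  · have h1 := oppositeCount_pos
      ((hX.isMixed_or_exists_isOppositeLeg hXY hYX).resolve_left hY.not_isMixed)
    rw [splitCount_of_isTransversal hY] at hsum
    have hlamY := hs.sub_two_le hY
    by_cases h2 : oppositeCount X Y = 1
    · have hadj : 2 * n - 2 ≤ lam X + lam Y :=
        hs.2.2.2 X Y hX hY (by rw [hX.ncard_symmDiff hY, h2])
      omega
    · omega
  · rw [hs.eq_spikeConn hY, spikeConn]
    rcases hX.isMixed_or_exists_isOppositeLeg hXY hYX with hmixed | hex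
    · rw [if_pos hmixed]
      omega
    · have := oppositeCount_pos hex
      split_ifs <;> omega

lemma union_add_inter_le (X Y : Set (En n)) :
    lam (X ∪ Y) + lam (X ∩ Y) ≤ lam X + lam Y := by
  by_cases hXY : X ⊆ Y
  · rw [Set.union_eq_self_of_subset_left hXY, Set.inter_eq_self_of_subset_left hXY, add_comm]
  by_cases hYX : Y ⊆ X
  · rw [Set.union_eq_self_of_subset_right hYX, Set.inter_eq_self_of_subset_right hYX]
  by_cases hX : IsTransversal X
  · exact hs.union_add_inter_le_of_isTransversal hX hXY hYX
  by_cases hY : IsTransversal Y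
  · rw [Set.union_comm, Set.inter_comm, add_comm (lam X)]
    exact hs.union_add_inter_le_of_isTransversal hY hYX hXY
  calc lam (X ∪ Y) + lam (X ∩ Y) ≤ spikeConn (X ∪ Y) + spikeConn (X ∩ Y) :=
        add_le_add (hs.le_spikeConn _) (hs.le_spikeConn _)
    _ ≤ spikeConn X + spikeConn Y := spikeConn_union_add_spikeConn_inter_le X Y
    _ = lam X + lam Y := by rw [hs.eq_spikeConn hX, hs.eq_spikeConn hY]

lemma apply_empty : lam ∅ = 0 :=
  Nat.le_zero.1 (spikeConn_empty (n := n) ▸ hs.le_spikeConn ∅)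

end IsSpiky

theorem stmt10_general {n : ℕ} (lam : Set (En n) → ℕ) (hs : IsSpiky n lam) :
    lam ∅ = 0 ∧
    (∀ X, lam X = lam Xᶜ) ∧
    (∀ X Y, lam (X ∪ Y) + lam (X ∩ Y) ≤ lam X + lam Y) :=
  ⟨hs.apply_empty, hs.1, hs.union_add_inter_le⟩

/-- Every spiky function is a connectivity function: normalised, symmetric, submodular. -/
theorem stmt10 {n : ℕ} (hn : 2 < n) (lam : Set (En n) → ℕ) (hs : IsSpiky n lam) :
    lam ∅ = 0 ∧
    (∀ X, lam X = lam Xᶜ) ∧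
    (∀ X Y, lam (X ∪ Y) + lam (X ∩ Y) ≤ lam X + lam Y) :=
  stmt10_general lam hs
end

section
/- If a spiky function λ on E_n is the connectivity function of a matroid M, then M is a rank-n spike with legs L_1,…,L_n; i.e., for all k ∈ {1,…,n−1} the union of any k legs has rank k+1 in M, and E_n has rank n. -/
/-!
On sets that are not transversals, the connectivity function of `M` agrees with `λ_n`, the
connectivity function of the free spike. For `t ∉ S ≠ ∅`, the set `Y = L_t ∪ {y_j | j ∉ S}`
has `λ_n(Y) = |Y| = n - |S| + 1` (its complement spans the free spike), and since
`r(E - Y) ≤ r(E)` this gives `r(Y) ≥ |Y|`: `Y` is independent in `M`. For `|S| = 1` both `Y`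
and its complement have `n` elements, which pins down `r(E) = n`. Placing `Y` inside a union
of legs gives `r(⋃_{i ∈ S} L_i) ≥ |S| + 1` for both `S` and its complement, while
`λ_n(⋃_{i ∈ S} L_i) = 2 = (|S| + 1) + (n - |S| + 1) - n` forces equality.
-/

section MatroidRank

variable {α : Type*} [Finite α] {M : Matroid α} {X Y I : Set α}

lemma bddAbove_indep_ncard (M : Matroid α) (X : Set α) :
    BddAbove {k | ∃ I, M.Indep I ∧ I ⊆ X ∧ I.ncard = k} :=
  ⟨Nat.card α, by rintro _ ⟨I, -, -, rfl⟩; exact Set.ncard_le_card I⟩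

lemma exists_indep_subset_ncard_eq_mrank (M : Matroid α) (X : Set α) :
    ∃ I, M.Indep I ∧ I ⊆ X ∧ I.ncard = mrank M X :=
  Nat.sSup_mem (s := {k | ∃ I, M.Indep I ∧ I ⊆ X ∧ I.ncard = k})
    ⟨0, ∅, M.empty_indep, Set.empty_subset X, Set.ncard_empty α⟩ (bddAbove_indep_ncard M X)

lemma Matroid.Indep.ncard_le_mrank (hI : M.Indep I) (hIX : I ⊆ X) : I.ncard ≤ mrank M X :=
  le_csSup (bddAbove_indep_ncard M X) ⟨I, hI, hIX, rfl⟩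

lemma mrank_le_ncard (M : Matroid α) (X : Set α) : mrank M X ≤ X.ncard := by
  obtain ⟨I, -, hIX, hI⟩ := exists_indep_subset_ncard_eq_mrank M X
  exact hI ▸ Set.ncard_le_ncard hIX

lemma mrank_mono (M : Matroid α) (h : X ⊆ Y) : mrank M X ≤ mrank M Y := by
  obtain ⟨I, hI, hIX, hIr⟩ := exists_indep_subset_ncard_eq_mrank M X
  exact hIr ▸ hI.ncard_le_mrank (hIX.trans h)

lemma Matroid.Indep.mrank_eq_ncard_s11 (hI : M.Indep I) : mrank M I = I.ncard :=
  (mrank_le_ncard M I).antisymm (hI.ncard_le_mrank subset_rfl)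

lemma indep_of_ncard_le_mrank (h : X.ncard ≤ mrank M X) : M.Indep X := by
  obtain ⟨I, hI, hIX, hIr⟩ := exists_indep_subset_ncard_eq_mrank M X
  rwa [Set.eq_of_subset_of_ncard_le hIX (hIr ▸ h)] at hI

lemma indep_of_ncard_le_conn
    (h : (Y.ncard : ℤ) ≤ mrank M X + mrank M Y - mrank M Set.univ) : M.Indep Y := by
  have := mrank_mono M (Set.subset_univ X)
  exact indep_of_ncard_le_mrank (by omega)

end MatroidRank

section SpikeSets

variable {n : ℕ} {S : Finset (Fin n)} {s t : Fin n} {X : Set (En n)}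

lemma mem_leg {i : Fin n} {p : En n} : p ∈ leg n i ↔ p.1 = i := by
  rcases p with ⟨j, _ | _⟩ <;> simp [leg, Prod.ext_iff]

lemma not_isTransversal_of_leg_subset (h : leg n t ⊆ X) : ¬ IsTransversal X := by
  intro hX
  have hx : (t, true) ∈ X := h (mem_leg.mpr rfl)
  have hy : (t, false) ∈ X := h (mem_leg.mpr rfl)
  rcases hX t with ⟨-, h⟩ | ⟨h, -⟩ <;> contradiction

lemma freeSpikeRank_of_disjoint_of_leg_subset {i j : Fin n} (hi : Disjoint (leg n i) X)
    (hj : leg n j ⊆ X) : freeSpikeRank n X = legCount X + 1 := by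
  rw [freeSpikeRank, if_neg fun h => h i hi, if_pos ⟨j, hj⟩]

def legUnion (S : Finset (Fin n)) : Set (En n) := ⋃ i ∈ S, leg n i

lemma mem_legUnion {p : En n} : p ∈ legUnion S ↔ p.1 ∈ S := by
  simp [legUnion, mem_leg]

lemma leg_subset_legUnion (hs : s ∈ S) : leg n s ⊆ legUnion S :=
  fun _ hp => mem_legUnion.mpr (mem_leg.mp hp ▸ hs)

lemma compl_legUnion : (legUnion S)ᶜ = legUnion Sᶜ := by
  ext p; simp [mem_legUnion]

lemma legCount_legUnion : legCount (legUnion S) = S.card := by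
  have : {i : Fin n | (i, true) ∈ legUnion S ∨ (i, false) ∈ legUnion S} = ↑S := by
    ext i; simp [mem_legUnion]
  rw [legCount, this, Set.ncard_coe_finset]

lemma freeSpikeRank_legUnion (hs : s ∈ S) (ht : t ∉ S) :
    freeSpikeRank n (legUnion S) = S.card + 1 := by
  have ht' : Disjoint (leg n t) (legUnion S) :=
    Set.disjoint_left.mpr fun _ hp hp' => ht (mem_leg.mp hp ▸ mem_legUnion.mp hp')
  rw [freeSpikeRank_of_disjoint_of_leg_subset ht' (leg_subset_legUnion hs), legCount_legUnion]

def legWithYs (S : Finset (Fin n)) (t : Fin n) : Set (En n) :=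
  {p | p.1 ∉ S ∧ (p.1 = t ∨ p.2 = false)}

lemma leg_subset_legWithYs (ht : t ∉ S) : leg n t ⊆ legWithYs S t :=
  fun _ hp => ⟨mem_leg.mp hp ▸ ht, Or.inl (mem_leg.mp hp)⟩

lemma disjoint_leg_legWithYs (hs : s ∈ S) : Disjoint (leg n s) (legWithYs S t) :=
  Set.disjoint_left.mpr fun _ hp hp' => hp'.1 (mem_leg.mp hp ▸ hs)

lemma legWithYs_subset_legUnion_compl : legWithYs Sᶜ t ⊆ legUnion S :=
  fun _ hp => mem_legUnion.mpr (by simpa using hp.1)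

lemma legCount_legWithYs : legCount (legWithYs S t) = n - S.card := by
  have : {i : Fin n | (i, true) ∈ legWithYs S t ∨ (i, false) ∈ legWithYs S t} = ↑Sᶜ := by
    ext i; simp [legWithYs]; tauto
  rw [legCount, this, Set.ncard_coe_finset, Finset.card_compl, Fintype.card_fin]

lemma legCount_compl_legWithYs (ht : t ∉ S) : legCount (legWithYs S t)ᶜ = n - 1 := by
  have : {i : Fin n | (i, true) ∈ (legWithYs S t)ᶜ ∨ (i, false) ∈ (legWithYs S t)ᶜ} =
      ↑({t}ᶜ : Finset (Fin n)) := by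
    ext i; by_cases hi : i = t <;> simp [legWithYs, hi, ht]
  rw [legCount, this, Set.ncard_coe_finset, Finset.card_compl, Fintype.card_fin,
    Finset.card_singleton]

lemma ncard_legWithYs (ht : t ∉ S) : (legWithYs S t).ncard = n - S.card + 1 := by
  have : legWithYs S t = insert (t, true) ((·, false) '' ↑Sᶜ) := by
    ext ⟨i, b⟩
    cases b <;> simp [legWithYs]
    rintro rfl; exact ht
  rw [this, Set.ncard_insert_of_notMem (by simp),
    Set.ncard_image_of_injective _ fun _ _ h => by simpa using h, Set.ncard_coe_finset,
    Finset.card_compl, Fintype.card_fin]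

lemma freeSpikeRank_legWithYs (hs : s ∈ S) (ht : t ∉ S) :
    freeSpikeRank n (legWithYs S t) = n - S.card + 1 := by
  rw [freeSpikeRank_of_disjoint_of_leg_subset (disjoint_leg_legWithYs hs)
    (leg_subset_legWithYs ht), legCount_legWithYs]

lemma freeSpikeRank_compl_legWithYs (hs : s ∈ S) (ht : t ∉ S) :
    freeSpikeRank n (legWithYs S t)ᶜ = n := by
  have := Fin.pos t
  rw [freeSpikeRank_of_disjoint_of_leg_subset
    (Set.disjoint_compl_right_iff_subset.mpr (leg_subset_legWithYs ht))
    (disjoint_leg_legWithYs hs).subset_compl_right, legCount_compl_legWithYs ht]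
  omega

end SpikeSets

section SpikeConnectivity

variable {n : ℕ} {S : Finset (Fin n)} {s t : Fin n} {M : Matroid (En n)}

def HasSpikeConnOffTransversals (M : Matroid (En n)) : Prop :=
  ∀ X, ¬ IsTransversal X → (mrank M X : ℤ) + mrank M Xᶜ - mrank M Set.univ = lamN n X

lemma IsSpiky.hasSpikeConnOffTransversals {lam : Set (En n) → ℕ} (hs : IsSpiky n lam)
    (hE : M.E = Set.univ) (hconn : ∀ X, (lam X : ℤ) = mconn M X) :
    HasSpikeConnOffTransversals M := fun X hX => by
  rw [← hs.2.1 X hX, hconn, mconn, hE, Set.compl_eq_univ_sdiff]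

namespace HasSpikeConnOffTransversals

lemma conn_legWithYs (hM : HasSpikeConnOffTransversals M) (hs : s ∈ S) (ht : t ∉ S) :
    (mrank M (legWithYs S t) : ℤ) + mrank M (legWithYs S t)ᶜ - mrank M Set.univ =
      (n - S.card + 1 : ℕ) := by
  rw [hM _ (not_isTransversal_of_leg_subset (leg_subset_legWithYs ht)), lamN,
    freeSpikeRank_legWithYs hs ht, freeSpikeRank_compl_legWithYs hs ht]
  ring

lemma indep_legWithYs (hM : HasSpikeConnOffTransversals M) (hs : s ∈ S) (ht : t ∉ S) :
    M.Indep (legWithYs S t) := by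
  have := hM.conn_legWithYs hs ht
  refine indep_of_ncard_le_conn (X := (legWithYs S t)ᶜ) ?_
  rw [ncard_legWithYs ht]
  omega

lemma mrank_univ (hM : HasSpikeConnOffTransversals M) (hst : s ≠ t) : mrank M Set.univ = n := by
  have hs : s ∈ ({s} : Finset (Fin n)) := Finset.mem_singleton_self s
  have ht : t ∉ ({s} : Finset (Fin n)) := by simpa using hst.symm
  have hY := hM.indep_legWithYs hs ht
  have hYcard : (legWithYs {s} t).ncard = n := by
    have := Fin.pos t
    rw [ncard_legWithYs ht, Finset.card_singleton]
    omega
  have hYcompl : (legWithYs {s} t)ᶜ.ncard = n := by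
    have := Set.ncard_add_ncard_compl (legWithYs {s} t)
    rw [Nat.card_eq_fintype_card, Fintype.card_prod, Fintype.card_fin, Fintype.card_bool] at this
    omega
  have hconn := hM.conn_legWithYs hs ht
  rw [hY.mrank_eq_ncard_s11, Finset.card_singleton] at hconn
  have := mrank_le_ncard M (legWithYs {s} t)ᶜ
  have := hY.ncard_le_mrank (Set.subset_univ _)
  omega

lemma le_mrank_legUnion (hM : HasSpikeConnOffTransversals M) (hs : s ∈ S) (ht : t ∉ S) :
    S.card + 1 ≤ mrank M (legUnion S) := by
  have hs' : s ∉ Sᶜ := Finset.notMem_compl.mpr hs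
  have := (hM.indep_legWithYs (Finset.mem_compl.mpr ht) hs').ncard_le_mrank
    legWithYs_subset_legUnion_compl
  rw [ncard_legWithYs hs', Finset.card_compl, Fintype.card_fin] at this
  have : S.card ≤ n := by simpa using S.card_le_univ
  omega

lemma mrank_legUnion (hM : HasSpikeConnOffTransversals M) (hs : s ∈ S) (ht : t ∉ S) :
    mrank M (legUnion S) = S.card + 1 := by
  have hs' : s ∉ Sᶜ := Finset.notMem_compl.mpr hs
  have ht' : t ∈ Sᶜ := Finset.mem_compl.mpr ht
  have hconn := hM _ (not_isTransversal_of_leg_subset (leg_subset_legUnion hs))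
  rw [lamN, compl_legUnion, freeSpikeRank_legUnion hs ht, freeSpikeRank_legUnion ht' hs',
    hM.mrank_univ (ne_of_mem_of_not_mem hs ht)] at hconn
  have := hM.le_mrank_legUnion hs ht
  have := hM.le_mrank_legUnion ht' hs'
  omega

end HasSpikeConnOffTransversals

end SpikeConnectivity

/-- If a spiky function is the connectivity function of a matroid `M`, then `M` is a
rank-`n` spike with legs `L_1, …, L_n`: any union of `k` legs (1 ≤ k ≤ n−1) has rank
`k + 1`, and `E_n` has rank `n`. -/
theorem stmt11 {n : ℕ} (hn : 2 < n) (lam : Set (En n) → ℕ) (hs : IsSpiky n lam)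
    (M : Matroid (En n)) (hE : M.E = Set.univ)
    (hconn : ∀ X, (lam X : ℤ) = mconn M X) :
    (∀ k : ℕ, 1 ≤ k → k ≤ n - 1 → ∀ s : Finset (Fin n), s.card = k →
      mrank M (⋃ i ∈ s, leg n i) = k + 1) ∧
    mrank M (Set.univ : Set (En n)) = n := by
  have hM := hs.hasSpikeConnOffTransversals hE hconn
  refine ⟨fun k hk1 hkn S hS => ?_,
    hM.mrank_univ (s := ⟨0, by omega⟩) (t := ⟨1, by omega⟩) (by simp)⟩
  obtain ⟨s, hs⟩ : S.Nonempty := Finset.card_pos.mp (by omega)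
  obtain ⟨t, ht⟩ : Sᶜ.Nonempty := by
    rw [← Finset.card_pos, Finset.card_compl, Fintype.card_fin]
    omega
  exact hS ▸ hM.mrank_legUnion hs (Finset.mem_compl.mp ht)
end
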